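/- Let Γ be a finite measure space, ζ_n ⇀* ζ in L∞(Γ) with 0 ≤ ζ_n ≤ 1, and let ζ̃ ∈ L∞(Γ) with 0 ≤ ζ̃ ≤ ζ a.e. Define ζ̃_n := ζ_n · (ζ̃/ζ) where ζ > 0 and ζ̃_n := 0 where ζ = 0. Then 0 ≤ ζ̃_n ≤ ζ_n a.e. and ζ̃_n ⇀* ζ̃ in L∞(Γ). -/
import Mathlib


open Filter MeasureTheory
open scoped Topology

/-- the mutual recovery sequence `ζ̃_n := ζ_n · (ζ̃/ζ)` (set to `0` on
`{ζ = 0}`) satisfies `0 ≤ ζ̃_n ≤ ζ_n` a.e. and converges weakly-* to `ζ̃`. -/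
theorem mutual_recovery_sequence
    {Γ : Type*} [MeasurableSpace Γ] (μ : Measure Γ) [IsFiniteMeasure μ]
    (ζn : ℕ → Γ → ℝ) (ζ ζt : Γ → ℝ)
    (hζnmeas : ∀ n, Measurable (ζn n)) (hζmeas : Measurable ζ)
    (hζtmeas : Measurable ζt)
    (hζnbdd : ∀ n, ∀ᵐ x ∂μ, 0 ≤ ζn n x ∧ ζn n x ≤ 1)
    (hweak : ∀ w : Γ → ℝ, Integrable w μ →
      Tendsto (fun n => ∫ x, ζn n x * w x ∂μ) atTop (𝓝 (∫ x, ζ x * w x ∂μ)))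
    (hζt : ∀ᵐ x ∂μ, 0 ≤ ζt x ∧ ζt x ≤ ζ x) :
    (∀ n, ∀ᵐ x ∂μ,
        0 ≤ (if 0 < ζ x then ζn n x * (ζt x / ζ x) else 0) ∧
        (if 0 < ζ x then ζn n x * (ζt x / ζ x) else 0) ≤ ζn n x) ∧
    (∀ w : Γ → ℝ, Integrable w μ →
      Tendsto
        (fun n => ∫ x, (if 0 < ζ x then ζn n x * (ζt x / ζ x) else 0) * w x ∂μ)
        atTop (𝓝 (∫ x, ζt x * w x ∂μ))) := by
  set g : Γ → ℝ := fun x => if 0 < ζ x then ζt x / ζ x else 0 with hg_def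
  have hg_meas : Measurable g :=
    Measurable.ite (measurableSet_lt measurable_const hζmeas)
      (hζtmeas.div hζmeas) measurable_const
  have hg_ae : ∀ᵐ x ∂μ, 0 ≤ g x ∧ g x ≤ 1 := by
    filter_upwards [hζt] with x hx
    obtain ⟨h0, h1⟩ := hx
    by_cases h : 0 < ζ x
    · simp only [hg_def, if_pos h]
      exact ⟨div_nonneg h0 h.le, div_le_one_of_le₀ h1 h.le⟩
    · simp [hg_def, h]
  constructor
  · intro n
    filter_upwards [hζnbdd n, hg_ae] with x hn hg
    obtain ⟨hn0, _⟩ := hn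
    obtain ⟨hg0, hg1⟩ := hg
    by_cases h : 0 < ζ x
    · simp only [if_pos h]
      have : g x = ζt x / ζ x := by simp [hg_def, h]
      rw [this] at hg0 hg1
      exact ⟨mul_nonneg hn0 hg0, by nlinarith⟩
    · simp [h, hn0]
  · intro w hw
    have hw' : Integrable (fun x => g x * w x) μ := by
      refine hw.bdd_mul (c := 1) hg_meas.aestronglyMeasurable ?_
      filter_upwards [hg_ae] with x hx
      rw [Real.norm_eq_abs, abs_le]
      exact ⟨by linarith [hx.1], hx.2⟩
    have h1 := hweak _ hw'
    have e1 : ∀ n, (∫ x, ζn n x * (g x * w x) ∂μ)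
        = ∫ x, (if 0 < ζ x then ζn n x * (ζt x / ζ x) else 0) * w x ∂μ := by
      intro n
      refine integral_congr_ae (Eventually.of_forall fun x => ?_)
      by_cases h : 0 < ζ x <;> simp [hg_def, h] <;> ring
    have e2 : (∫ x, ζ x * (g x * w x) ∂μ) = ∫ x, ζt x * w x ∂μ := by
      refine integral_congr_ae ?_
      filter_upwards [hζt] with x hx
      obtain ⟨h0, h1⟩ := hx
      by_cases h : 0 < ζ x
      · simp only [hg_def, if_pos h]
        field_simp
      · have : ζt x = 0 := le_antisymm (by linarith [not_lt.mp h]) h0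
        simp [hg_def, h, this]
    rw [e2] at h1
    simpa [e1] using h1
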